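/- arXiv:2406.10770 — 8 statements merged into one kernel-verified Lean document; each statement's English description precedes it below -/
import Mathlib

section
/- A serial Euclidean frame F = (X, R) is connected if and only if the subframe generated by U_F is a cluster, i.e., R restricted to U_F equals U_F × U_F, where U_F is the unique subset such that R restricted to U_F is an equivalence relation and R ⊆ X × U_F. -/
theorem stmt_2 {X : Type*} [Nonempty X] (R : X → X → Prop) (U : Set X)
    (hser : ∀ a : X, ∃ b, R a b)
    (heucl : ∀ a b c : X, R a b → R a c → R b c)
    (hrefl : ∀ u ∈ U, R u u)
    (hsymm : ∀ a ∈ U, ∀ b ∈ U, R a b → R b a)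
    (htrans : ∀ a ∈ U, ∀ b ∈ U, ∀ c ∈ U, R a b → R b c → R a c)
    (hsub : ∀ a b : X, R a b → b ∈ U) :
    (∀ a b : X, Relation.EqvGen R a b) ↔ (∀ a ∈ U, ∀ b ∈ U, R a b) := by
  constructor
  · intro hcon
    have key : ∀ x y, Relation.EqvGen R x y →
        ∀ u, R x u → ∀ v, R y v → R u v := by
      intro x y h
      induction h with
      | rel x y hxy =>
          intro u hu v hv
          exact heucl y u v (heucl x y u hxy hu) hv
      | refl x =>
          intro u hu v hv
          exact heucl x u v hu hv
      | symm x y _ ih =>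
          intro u hu v hv
          exact hsymm v (hsub x v hv) u (hsub y u hu) (ih v hv u hu)
      | trans x y z _ _ ih1 ih2 =>
          intro u hu v hv
          obtain ⟨w, hw⟩ := hser y
          exact htrans u (hsub x u hu) w (hsub y w hw) v (hsub z v hv)
            (ih1 u hu w hw) (ih2 w hw v hv)
    intro a ha b hb
    exact key a b (hcon a b) a (hrefl a ha) b (hrefl b hb)
  · intro htot a b
    obtain ⟨a', ha'⟩ := hser a
    obtain ⟨b', hb'⟩ := hser b
    have h1 : Relation.EqvGen R a a' := Relation.EqvGen.rel _ _ ha'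
    have h2 : Relation.EqvGen R a' b' :=
      Relation.EqvGen.rel _ _ (htot a' (hsub a a' ha') b' (hsub b b' hb'))
    have h3 : Relation.EqvGen R b' b :=
      Relation.EqvGen.symm _ _ (Relation.EqvGen.rel _ _ hb')
    exact h1.trans _ _ _ (h2.trans _ _ _ h3)
end

section
/- The number of connected serial Euclidean frames on the labelled state set {0,...,n−1} equals the sum over m from 1 to n of binomial(n, m) · (2^m − 1)^(n−m). -/
open Finset

theorem stmt_4 (n : ℕ) (hn : 1 ≤ n) :
    Nat.card {R : Fin n → Fin n → Prop //
        (∀ a, ∃ b, R a b) ∧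
        (∀ a b c, R a b → R a c → R b c) ∧
        (∀ a b, Relation.EqvGen R a b)} =
      ∑ m ∈ Finset.Icc 1 n, n.choose m * (2 ^ m - 1) ^ (n - m) := by
  classical
  -- cluster lemma
  have cluster : ∀ (R : Fin n → Fin n → Prop),
      (∀ a, ∃ b, R a b) → (∀ a b c, R a b → R a c → R b c) →
      ∀ {a b : Fin n}, Relation.EqvGen R a b →
      ∀ u v, R a u → R b v → R u v ∧ R v u := by
    intro R hS hE a b h
    induction h with
    | rel x y hxy =>
        intro u v hu hv
        have h1 : R y u := hE x y u hxy hu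
        exact ⟨hE y u v h1 hv, hE y v u hv h1⟩
    | refl x =>
        intro u v hu hv
        exact ⟨hE x u v hu hv, hE x v u hv hu⟩
    | symm x y _ ih =>
        intro u v hu hv
        exact ⟨(ih v u hv hu).2, (ih v u hv hu).1⟩
    | trans x y z _ _ ih1 ih2 =>
        intro u v hu hv
        obtain ⟨w, hw⟩ := hS y
        have h1 := ih1 u w hu hw
        have h2 := ih2 w v hw hv
        exact ⟨hE w u v h1.2 h2.1, hE w v u h2.1 h1.2⟩
  set A := {R : Fin n → Fin n → Prop //
        (∀ a, ∃ b, R a b) ∧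
        (∀ a b c, R a b → R a c → R b c) ∧
        (∀ a b, Relation.EqvGen R a b)} with hA
  -- the map B → A
  have hx0 : (0 : ℕ) < n := hn
  let F : (Σ U : {U : Finset (Fin n) // U.Nonempty},
      ({a : Fin n // a ∉ U.1} → {s : Finset (Fin n) // s ⊆ U.1 ∧ s.Nonempty})) → A := fun p =>
    ⟨fun a b => if h : a ∈ p.1.1 then b ∈ p.1.1 else b ∈ (p.2 ⟨a, h⟩).1, by
      obtain ⟨⟨U, hU⟩, g⟩ := p
      dsimp only
      have hsub : ∀ a b, (if h : a ∈ U then b ∈ U else b ∈ (g ⟨a, h⟩).1) → b ∈ U := by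
        intro a b hab
        by_cases h : a ∈ U
        · rwa [dif_pos h] at hab
        · rw [dif_neg h] at hab
          exact (g ⟨a, h⟩).2.1 hab
      refine ⟨?_, ?_, ?_⟩
      · intro a
        by_cases h : a ∈ U
        · obtain ⟨b, hb⟩ := hU
          exact ⟨b, by rw [dif_pos h]; exact hb⟩
        · obtain ⟨b, hb⟩ := (g ⟨a, h⟩).2.2
          exact ⟨b, by rw [dif_neg h]; exact hb⟩
      · intro a b c hab hac
        have hb : b ∈ U := hsub a b hab
        have hc : c ∈ U := hsub a c hac
        rw [dif_pos hb]
        exact hc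
      · -- connectedness
        obtain ⟨u0, hu0⟩ := hU
        have key : ∀ a : Fin n, Relation.EqvGen
            (fun a b => if h : a ∈ U then b ∈ U else b ∈ (g ⟨a, h⟩).1) a u0 := by
          intro a
          by_cases h : a ∈ U
          · exact Relation.EqvGen.rel _ _ (by rw [dif_pos h]; exact hu0)
          · obtain ⟨b, hb⟩ := (g ⟨a, h⟩).2.2
            have hbU : b ∈ U := (g ⟨a, h⟩).2.1 hb
            refine Relation.EqvGen.trans _ b _
              (Relation.EqvGen.rel _ _ (by rw [dif_neg h]; exact hb))
              (Relation.EqvGen.rel _ _ (by rw [dif_pos hbU]; exact hu0))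
        intro a b
        exact Relation.EqvGen.trans _ u0 _ (key a) (Relation.EqvGen.symm _ _ (key b))⟩
  -- F is bijective
  have hFinj : Function.Injective F := by
    rintro ⟨⟨U, hU⟩, g⟩ ⟨⟨U', hU'⟩, g'⟩ h
    have hR := congrArg Subtype.val h
    dsimp only [F] at hR
    have hRab : ∀ a b, (if h : a ∈ U then b ∈ U else b ∈ (g ⟨a, h⟩).1) ↔
        (if h : a ∈ U' then b ∈ U' else b ∈ (g' ⟨a, h⟩).1) := by
      intro a b
      constructor
      · intro hx; exact (congrFun (congrFun hR a) b) ▸ hx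
      · intro hx; exact (congrFun (congrFun hR a) b).symm ▸ hx
    have memU : ∀ (V : Finset (Fin n)) (gg : {a : Fin n // a ∉ V} →
        {s : Finset (Fin n) // s ⊆ V ∧ s.Nonempty}) (b : Fin n),
        (if h : b ∈ V then b ∈ V else b ∈ (gg ⟨b, h⟩).1) ↔ b ∈ V := by
      intro V gg b
      by_cases h : b ∈ V
      · rw [dif_pos h]
      · rw [dif_neg h]
        constructor
        · intro hb; exact absurd ((gg ⟨b, h⟩).2.1 hb) h
        · intro hb; exact absurd hb h
    have hUU : U = U' := by
      ext b
      rw [← memU U g b, ← memU U' g' b]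
      exact hRab b b
    subst hUU
    have hgg : g = g' := by
      funext a
      apply Subtype.ext
      ext b
      have := hRab a.1 b
      rw [dif_neg a.2, dif_neg a.2] at this
      exact this
    rw [hgg]
  have hFsurj : Function.Surjective F := by
    rintro ⟨R, hS, hE, hC⟩
    -- U = set of successors
    set U : Finset (Fin n) := univ.filter (fun b => ∃ a, R a b) with hUdef
    have hmemU : ∀ b, b ∈ U ↔ ∃ a, R a b := by
      intro b; simp [hUdef]
    have hU : U.Nonempty := by
      obtain ⟨b, hb⟩ := hS ⟨0, hx0⟩
      exact ⟨b, (hmemU b).2 ⟨_, hb⟩⟩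
    let g : {a : Fin n // a ∉ U} → {s : Finset (Fin n) // s ⊆ U ∧ s.Nonempty} :=
      fun a => ⟨univ.filter (fun b => R a.1 b), by
        constructor
        · intro b hb
          rw [mem_filter] at hb
          exact (hmemU b).2 ⟨a.1, hb.2⟩
        · obtain ⟨b, hb⟩ := hS a.1
          exact ⟨b, by simp [hb]⟩⟩
    refine ⟨⟨⟨U, hU⟩, g⟩, ?_⟩
    apply Subtype.ext
    dsimp only [F]
    funext a b
    apply propext
    by_cases h : a ∈ U
    · rw [dif_pos h]
      constructor
      · intro hb
        obtain ⟨x, hx⟩ := (hmemU a).1 h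
        obtain ⟨y, hy⟩ := (hmemU b).1 hb
        exact (cluster R hS hE (hC x y) a b hx hy).1
      · intro hb
        exact (hmemU b).2 ⟨a, hb⟩
    · rw [dif_neg h]
      simp [g]
  have hcard : Nat.card (Σ U : {U : Finset (Fin n) // U.Nonempty},
      ({a : Fin n // a ∉ U.1} → {s : Finset (Fin n) // s ⊆ U.1 ∧ s.Nonempty})) = Nat.card A :=
    Nat.card_eq_of_bijective F ⟨hFinj, hFsurj⟩
  rw [hA] at hcard
  rw [← hcard, Nat.card_eq_fintype_card]
  rw [Fintype.card_sigma]
  have hterm : ∀ U : {U : Finset (Fin n) // U.Nonempty},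
      Fintype.card ({a : Fin n // a ∉ U.1} → {s : Finset (Fin n) // s ⊆ U.1 ∧ s.Nonempty})
      = (2 ^ U.1.card - 1) ^ (n - U.1.card) := by
    rintro ⟨U, hU⟩
    rw [Fintype.card_fun]
    congr 1
    · -- card of nonempty subsets
      rw [Fintype.card_subtype]
      have : (univ.filter (fun s : Finset (Fin n) => s ⊆ U ∧ s.Nonempty))
          = U.powerset.erase ∅ := by
        ext s
        simp [Finset.nonempty_iff_ne_empty, and_comm]
      rw [this, card_erase_of_mem (by simp), card_powerset]
    · rw [Fintype.card_subtype_compl, Fintype.card_fin]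
      simp
  calc (∑ U : {U : Finset (Fin n) // U.Nonempty},
        Fintype.card ({a : Fin n // a ∉ U.1} →
          {s : Finset (Fin n) // s ⊆ U.1 ∧ s.Nonempty}))
      = ∑ U : {U : Finset (Fin n) // U.Nonempty},
          (2 ^ U.1.card - 1) ^ (n - U.1.card) := by
        exact Finset.sum_congr rfl (fun U _ => hterm U)
    _ = ∑ U ∈ univ.filter (fun U : Finset (Fin n) => U.Nonempty),
          (2 ^ U.card - 1) ^ (n - U.card) := by
        exact (Finset.sum_subtype (univ.filter (fun U : Finset (Fin n) => U.Nonempty))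
          (fun U => by simp) (fun U => (2 ^ U.card - 1) ^ (n - U.card))).symm
    _ = ∑ U : Finset (Fin n), (2 ^ U.card - 1) ^ (n - U.card) := by
        apply Finset.sum_subset (Finset.filter_subset _ _)
        intro U _ hU
        have : U = ∅ := by
          simpa [Finset.nonempty_iff_ne_empty] using hU
        subst this
        simp [Nat.zero_pow hx0]
    _ = ∑ U ∈ (univ : Finset (Fin n)).powerset, (2 ^ U.card - 1) ^ (n - U.card) := by
        rw [Finset.powerset_univ]
    _ = ∑ m ∈ range (n + 1), n.choose m • ((2 ^ m - 1) ^ (n - m)) := by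
        rw [Finset.sum_powerset_apply_card (fun m => (2 ^ m - 1) ^ (n - m))]
        simp [Finset.card_univ]
    _ = ∑ m ∈ Finset.Icc 1 n, n.choose m * (2 ^ m - 1) ^ (n - m) := by
        have hins : range (n + 1) = insert 0 (Finset.Icc 1 n) := by
          ext m
          simp only [Finset.mem_range, Finset.mem_insert, Finset.mem_Icc]
          constructor
          · intro h
            rcases Nat.eq_zero_or_pos m with h0 | h0
            · exact Or.inl h0
            · exact Or.inr ⟨h0, Nat.lt_succ_iff.mp h⟩
          · rintro (rfl | ⟨h1, h2⟩)
            · exact Nat.succ_pos n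
            · exact Nat.lt_succ_of_le h2
        rw [hins, Finset.sum_insert (by simp)]
        simp [Nat.zero_pow hx0]
end

section
/- The number of serial transitive Euclidean connected frames on the labelled state set {0,...,n−1} equals 2^n − 1. -/
theorem stmt_6 (n : ℕ) (hn : 1 ≤ n) :
    Nat.card {R : Fin n → Fin n → Prop //
        (∀ a, ∃ b, R a b) ∧
        (∀ a b c, R a b → R b c → R a c) ∧
        (∀ a b c, R a b → R a c → R b c) ∧
        (∀ a b, Relation.EqvGen R a b)} =
      2 ^ n - 1 := by
  classical
  have x0 : Fin n := ⟨0, hn⟩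
  have key : ∀ (R : Fin n → Fin n → Prop),
      (∀ a b c, R a b → R b c → R a c) → (∀ a b c, R a b → R a c → R b c) →
      ∀ a b, Relation.EqvGen R a b → R a = R b := by
    intro R htr heu a b h
    induction h with
    | rel a b hab =>
        funext c; exact propext ⟨fun h => heu _ _ _ hab h, fun h => htr _ _ _ hab h⟩
    | refl => rfl
    | symm _ _ _ ih => exact ih.symm
    | trans _ _ _ _ _ ih1 ih2 => exact ih1.trans ih2
  have e : {R : Fin n → Fin n → Prop //
        (∀ a, ∃ b, R a b) ∧
        (∀ a b c, R a b → R b c → R a c) ∧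
        (∀ a b c, R a b → R a c → R b c) ∧
        (∀ a b, Relation.EqvGen R a b)} ≃ {U : Set (Fin n) // U.Nonempty} :=
    { toFun := fun R => ⟨{b | R.1 x0 b}, R.2.1 x0⟩
      invFun := fun U => ⟨fun _ b => b ∈ U.1, by
        refine ⟨fun a => ?_, fun a b c h1 h2 => h2, fun a b c h1 h2 => h2, fun a b => ?_⟩
        · obtain ⟨u, hu⟩ := U.2; exact ⟨u, hu⟩
        · obtain ⟨u, hu⟩ := U.2
          exact .trans _ _ _ (.rel a u hu) (.symm _ _ (.rel b u hu))⟩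
      left_inv := by
        rintro ⟨R, hs, htr, heu, hc⟩
        ext a b
        simp only [Set.mem_setOf_eq]
        have := key R htr heu x0 a (hc x0 a)
        rw [this]
      right_inv := fun U => rfl }
  rw [Nat.card_congr e]
  have e2 : {U : Set (Fin n) // U.Nonempty} ≃ {U : Set (Fin n) // ¬ U = ∅} :=
    Equiv.subtypeEquivRight (fun U => Set.nonempty_iff_ne_empty)
  rw [Nat.card_congr e2, Nat.card_eq_fintype_card, Fintype.card_subtype_compl,
    Fintype.card_subtype_eq]
  simp
end

section
/- A Euclidean frame F = (X, R) is serial, transitive, and connected if and only if there exists a nonempty subset U ⊆ X with R = X × U. -/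
theorem stmt_7 {X : Type*} [Nonempty X] (R : X → X → Prop)
    (heucl : ∀ a b c : X, R a b → R a c → R b c) :
    ((∀ a : X, ∃ b, R a b) ∧
      (∀ a b c : X, R a b → R b c → R a c) ∧
      (∀ a b : X, Relation.EqvGen R a b)) ↔
    ∃ U : Set X, U.Nonempty ∧ ∀ a b : X, R a b ↔ b ∈ U := by
  constructor
  · rintro ⟨hser, htrans, hconn⟩
    obtain ⟨a₀⟩ := ‹Nonempty X›
    have same : ∀ a b : X, Relation.EqvGen R a b → ∀ x, R a x ↔ R b x := by
      intro a b h
      induction h with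
      | rel a b hab =>
        intro x
        exact ⟨fun h => heucl a b x hab h, fun h => htrans a b x hab h⟩
      | refl a => intro x; rfl
      | symm a b _ ih => intro x; exact (ih x).symm
      | trans a b c _ _ ih1 ih2 => intro x; exact (ih1 x).trans (ih2 x)
    refine ⟨{x | R a₀ x}, hser a₀, fun a b => ?_⟩
    exact (same a a₀ (hconn a a₀) b)
  · rintro ⟨U, ⟨u, hu⟩, hR⟩
    refine ⟨fun a => ⟨u, (hR a u).2 hu⟩,
      fun a b c hab hbc => (hR a c).2 ((hR b c).1 hbc),
      fun a b => ?_⟩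
    exact (Relation.EqvGen.rel a u ((hR a u).2 hu)).trans _ _ _
      ((Relation.EqvGen.rel b u ((hR b u).2 hu)).symm _ _)
end

section
/- The number of symmetric Euclidean frames on the labelled state set {0,...,n−1} equals the Bell number B_{n+1}. -/
/-- The Bell number `B k`: the number of equivalence relations on a `k`-element set. -/
noncomputable def bell (k : ℕ) : ℕ := Nat.card {r : Fin k → Fin k → Prop // Equivalence r}

section Aux

variable {n : ℕ}

/-- Extend a relation on `Fin n` to `Fin (n+1)` by making the new point `last n`
equivalent to all points outside the support. -/
def extRel (R : Fin n → Fin n → Prop) (x y : Fin (n + 1)) : Prop :=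
  (∃ a b : Fin n, x = a.castSucc ∧ y = b.castSucc ∧ R a b) ∨
  ((¬ ∃ a : Fin n, x = a.castSucc ∧ R a a) ∧ ¬ ∃ b : Fin n, y = b.castSucc ∧ R b b)

/-- Restrict an equivalence relation on `Fin (n+1)` to the points not related to `last n`. -/
def restRel (r : Fin (n + 1) → Fin (n + 1) → Prop) (a b : Fin n) : Prop :=
  r a.castSucc b.castSucc ∧ ¬ r a.castSucc (Fin.last n)

lemma castSucc_ne_last (a : Fin n) : (a.castSucc : Fin (n + 1)) ≠ Fin.last n :=
  (Fin.castSucc_lt_last a).ne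

lemma extRel_equiv {R : Fin n → Fin n → Prop}
    (hs : ∀ a b, R a b → R b a) (he : ∀ a b c, R a b → R a c → R b c) :
    Equivalence (extRel R) := by
  have htr : ∀ a b c, R a b → R b c → R a c := fun a b c h1 h2 => he b a c (hs a b h1) h2
  have hrefl : ∀ a b, R a b → R a a := fun a b h => htr a b a h (hs a b h)
  constructor
  · intro x
    by_cases h : ∃ a : Fin n, x = a.castSucc ∧ R a a
    · obtain ⟨a, hx, haa⟩ := h
      exact Or.inl ⟨a, a, hx, hx, haa⟩
    · exact Or.inr ⟨h, h⟩
  · intro x y h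
    rcases h with ⟨a, b, hx, hy, hab⟩ | ⟨h1, h2⟩
    · exact Or.inl ⟨b, a, hy, hx, hs a b hab⟩
    · exact Or.inr ⟨h2, h1⟩
  · intro x y z hxy hyz
    rcases hxy with ⟨a, b, hx, hy, hab⟩ | ⟨h1, h2⟩
    · rcases hyz with ⟨b', c, hy', hz, hbc⟩ | ⟨h2, h3⟩
      · have : b = b' := Fin.castSucc_injective n (hy ▸ hy')
        exact Or.inl ⟨a, c, hx, hz, htr a b c hab (this ▸ hbc)⟩
      · exact absurd ⟨b, hy, hrefl b a (hs a b hab)⟩ h2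
    · rcases hyz with ⟨b, c, hy, hz, hbc⟩ | ⟨h2', h3⟩
      · exact absurd ⟨b, hy, hrefl b c hbc⟩ h2
      · exact Or.inr ⟨h1, h3⟩

lemma restRel_symm {r : Fin (n + 1) → Fin (n + 1) → Prop} (hr : Equivalence r) :
    ∀ a b, restRel r a b → restRel r b a := by
  rintro a b ⟨h1, h2⟩
  exact ⟨hr.symm h1, fun h => h2 (hr.trans h1 h)⟩

lemma restRel_eucl {r : Fin (n + 1) → Fin (n + 1) → Prop} (hr : Equivalence r) :
    ∀ a b c, restRel r a b → restRel r a c → restRel r b c := by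
  rintro a b c ⟨h1, h2⟩ ⟨h3, h4⟩
  exact ⟨hr.trans (hr.symm h1) h3, fun h => h2 (hr.trans h1 h)⟩

lemma restRel_extRel {R : Fin n → Fin n → Prop}
    (hs : ∀ a b, R a b → R b a) (he : ∀ a b c, R a b → R a c → R b c) :
    restRel (extRel R) = R := by
  have hrefl : ∀ a b, R a b → R a a := fun a b h =>
    he b a a (hs a b h) (hs a b h)
  funext a b
  apply propext
  constructor
  · rintro ⟨h1, h2⟩
    rcases h1 with ⟨a', b', ha, hb, hab⟩ | ⟨hna, hnb⟩
    · have : a = a' := Fin.castSucc_injective n ha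
      have : b = b' := Fin.castSucc_injective n hb
      subst this
      have : a = a' := Fin.castSucc_injective n ha
      subst this
      exact hab
    · exfalso
      apply h2
      refine Or.inr ⟨?_, ?_⟩
      · rintro ⟨c, hc, hcc⟩
        have : a = c := Fin.castSucc_injective n hc
        subst this
        exact hna ⟨a, rfl, hcc⟩
      · rintro ⟨c, hc, _⟩
        exact castSucc_ne_last c hc.symm
  · intro h
    constructor
    · exact Or.inl ⟨a, b, rfl, rfl, h⟩
    · rintro (⟨a', c, _, hc, _⟩ | ⟨h1, _⟩)
      · exact castSucc_ne_last c hc.symm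
      · exact h1 ⟨a, rfl, hrefl a b h⟩

lemma extRel_restRel {r : Fin (n + 1) → Fin (n + 1) → Prop} (hr : Equivalence r) :
    extRel (restRel r) = r := by
  have hS : ∀ a : Fin n, (¬ ∃ c : Fin n, (a.castSucc : Fin (n+1)) = c.castSucc ∧ restRel r c c)
      ↔ r a.castSucc (Fin.last n) := by
    intro a
    constructor
    · intro h
      by_contra hlast
      exact h ⟨a, rfl, hr.refl _, hlast⟩
    · rintro hlast ⟨c, hc, _, h2⟩
      have : a = c := Fin.castSucc_injective n hc
      subst this
      exact h2 hlast
  have hSlast : ¬ ∃ c : Fin n, (Fin.last n : Fin (n+1)) = c.castSucc ∧ restRel r c c := by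
    rintro ⟨c, hc, _⟩
    exact castSucc_ne_last c hc.symm
  funext x y
  apply propext
  induction x using Fin.lastCases with
  | last =>
    induction y using Fin.lastCases with
    | last =>
      simp only [extRel]
      constructor
      · intro _; exact hr.refl _
      · intro _; exact Or.inr ⟨hSlast, hSlast⟩
    | cast b =>
      constructor
      · rintro (⟨a', c, ha, _, _⟩ | ⟨_, h2⟩)
        · exact absurd ha.symm (castSucc_ne_last a')
        · exact hr.symm (((hS b).mp h2))
      · intro h
        exact Or.inr ⟨hSlast, (hS b).mpr (hr.symm h)⟩
  | cast a =>
    induction y using Fin.lastCases with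
    | last =>
      constructor
      · rintro (⟨a', c, _, hc, _⟩ | ⟨h1, _⟩)
        · exact absurd hc.symm (castSucc_ne_last c)
        · exact (hS a).mp h1
      · intro h
        exact Or.inr ⟨(hS a).mpr h, hSlast⟩
    | cast b =>
      constructor
      · rintro (⟨a', b', ha, hb, hab⟩ | ⟨h1, h2⟩)
        · have e1 : a = a' := Fin.castSucc_injective n ha
          have e2 : b = b' := Fin.castSucc_injective n hb
          subst e1; subst e2
          exact hab.1
        · exact hr.trans ((hS a).mp h1) (hr.symm ((hS b).mp h2))
      · intro h
        by_cases hlast : r a.castSucc (Fin.last n)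
        · exact Or.inr ⟨(hS a).mpr hlast, (hS b).mpr (hr.trans (hr.symm h) hlast)⟩
        · exact Or.inl ⟨a, b, rfl, rfl, h, hlast⟩

end Aux

theorem stmt_8 (n : ℕ) :
    Nat.card {R : Fin n → Fin n → Prop //
        (∀ a b, R a b → R b a) ∧ (∀ a b c, R a b → R a c → R b c)} =
      bell (n + 1) := by
  rw [bell]
  apply Nat.card_congr
  exact {
    toFun := fun ⟨R, hs, he⟩ => ⟨extRel R, extRel_equiv hs he⟩
    invFun := fun ⟨r, hr⟩ => ⟨restRel r, restRel_symm hr, restRel_eucl hr⟩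
    left_inv := fun ⟨R, hs, he⟩ => Subtype.ext (restRel_extRel hs he)
    right_inv := fun ⟨r, hr⟩ => Subtype.ext (extRel_restRel hr) }
end

section
/- The Bell numbers satisfy B_n^{(n+1)/n} ≤ B_{n+1} for all n ≥ 1, and consequently B_n / B_{n+1} ≤ B_n^{−1/n}. -/
open Finset
open scoped Nat ENNReal

def Equiv.setoidCongr {α β : Type*} (e : α ≃ β) : Setoid α ≃ Setoid β where
  toFun s := s.comap e.symm
  invFun s := s.comap e
  left_inv s := by ext; simp [Setoid.comap_rel]
  right_inv s := by ext; simp [Setoid.comap_rel]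

namespace Setoid

variable {α : Type*}

def equivSubtypeEquivalence : Setoid α ≃ {r : α → α → Prop // Equivalence r} where
  toFun s := ⟨s.r, s.iseqv⟩
  invFun r := ⟨r.1, r.2⟩

instance [Finite α] : Finite (Setoid α) :=
  Finite.of_injective (fun s : Setoid α => s.r) fun _ _ h => Setoid.ext fun x y => by simp_all

section Option

variable [DecidableEq α]

/-- The relation on `Option α` in which `none` is related exactly to the elements of `s`, and
`α \ s` carries `t`. -/
def extendCompl (s : Finset α) (t : Setoid {a // a ∉ s}) : Setoid (Option α) :=
  ker fun x => x.bind fun a => if h : a ∈ s then none else some (Quotient.mk t ⟨a, h⟩)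

theorem extendCompl_rel (s : Finset α) (t : Setoid {a // a ∉ s}) (u v : Option α) :
    extendCompl s t u v ↔
      (u.bind fun a => if h : a ∈ s then none else some (Quotient.mk t ⟨a, h⟩)) =
        (v.bind fun a => if h : a ∈ s then none else some (Quotient.mk t ⟨a, h⟩)) :=
  ker_def

variable [Fintype α]

open scoped Classical in
noncomputable def noneClass (t : Setoid (Option α)) : Finset α := {a | t (some a) none}

omit [DecidableEq α] in
theorem mem_noneClass {t : Setoid (Option α)} {a : α} : a ∈ noneClass t ↔ t (some a) none := by
  simp [noneClass]

theorem noneClass_extendCompl (s : Finset α) (t : Setoid {a // a ∉ s}) :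
    noneClass (extendCompl s t) = s := by
  ext a
  by_cases h : a ∈ s <;> simp [mem_noneClass, extendCompl_rel, h]

theorem extendCompl_noneClass (t : Setoid (Option α)) :
    extendCompl (noneClass t) (t.comap fun a => some a.1) = t := by
  ext u v
  rcases u with _ | a <;> rcases v with _ | b
  · simp
  · by_cases hb : b ∈ noneClass t <;> simp_all [extendCompl_rel, mem_noneClass, t.comm]
  · by_cases ha : a ∈ noneClass t <;> simp_all [extendCompl_rel, mem_noneClass]
  · by_cases ha : a ∈ noneClass t <;> by_cases hb : b ∈ noneClass t <;>
      simp_all [extendCompl_rel, mem_noneClass, comap_rel, Quotient.eq]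
    · exact t.trans ha (t.symm hb)
    · exact fun h => hb (t.trans (t.symm h) ha)
    · exact fun h => ha (t.trans h hb)

noncomputable def noneClassFiberEquiv (s : Finset α) :
    {t : Setoid (Option α) // noneClass t = s} ≃ Setoid {a // a ∉ s} where
  toFun t := t.1.comap fun a => some a.1
  invFun t := ⟨extendCompl s t, noneClass_extendCompl s t⟩
  left_inv := by
    rintro ⟨t, rfl⟩
    exact Subtype.ext (extendCompl_noneClass t)
  right_inv t := by
    ext a b
    simp [comap_rel, extendCompl_rel, a.2, b.2, Quotient.eq]

theorem card_option_eq_sum :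
    Nat.card (Setoid (Option α)) = ∑ s : Finset α, Nat.card (Setoid {a // a ∉ s}) := by
  rw [← Nat.card_congr (Equiv.sigmaFiberEquiv noneClass), Nat.card_sigma]
  exact sum_congr rfl fun s _ => Nat.card_congr (noneClassFiberEquiv s)

end Option

theorem card_fin_eq_bell (n : ℕ) : Nat.card (Setoid (Fin n)) = Nat.bell n := by
  induction n using Nat.strong_induction_on with
  | _ n ih =>
  rcases n with _ | n
  · rw [Nat.bell_zero, Nat.card_eq_one_iff_unique]
    exact ⟨⟨fun s t => ext fun x _ => Fin.elim0 x⟩, ⟨⊥⟩⟩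
  · have hcompl (s : Finset (Fin n)) : Nat.card (Setoid {a // a ∉ s}) = Nat.bell (n - #s) := by
      rw [← ih (n - #s) (by omega)]
      exact Nat.card_congr (Equiv.setoidCongr (Fintype.equivFinOfCardEq (by simp)))
    rw [Nat.card_congr (Equiv.setoidCongr (finSuccEquiv n)), card_option_eq_sum, Nat.bell_succ,
      ← Nat.range_succ_eq_Iic, Fintype.sum_congr _ _ hcompl, ← powerset_univ,
      sum_powerset_apply_card fun k => Nat.bell (n - k)]
    simp

end Setoid

theorem bell_eq_nat_bell (k : ℕ) : bell k = Nat.bell k := by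
  rw [bell, ← Nat.card_congr Setoid.equivSubtypeEquivalence, Setoid.card_fin_eq_bell]

theorem Nat.bell_pos (n : ℕ) : 0 < Nat.bell n :=
  Setoid.card_fin_eq_bell n ▸ Nat.card_pos

namespace ENNReal

theorem tsum_inv_factorial : ∑' k : ℕ, (k ! : ℝ≥0∞)⁻¹ = ENNReal.ofReal (Real.exp 1) := by
  rw [Real.exp_eq_exp_ℝ, NormedSpace.exp_eq_tsum_div,
    ENNReal.ofReal_tsum_of_nonneg (fun _ => by positivity) (Real.summable_pow_div_factorial 1)]
  refine tsum_congr fun k => ?_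
  rw [one_pow, one_div, ENNReal.ofReal_inv_of_pos (by positivity), ENNReal.ofReal_natCast]

theorem tsum_pow_succ_div_factorial (n : ℕ) :
    ∑' k : ℕ, (k : ℝ≥0∞) ^ (n + 1) / k ! =
      ∑ m ∈ range (n + 1), n.choose m * ∑' k : ℕ, (k : ℝ≥0∞) ^ (n - m) / k ! := by
  have hshift (k : ℕ) : ((k + 1 : ℕ) : ℝ≥0∞) ^ (n + 1) / (k + 1)! = (1 + k) ^ n / k ! := by
    rw [Nat.factorial_succ, pow_succ', Nat.cast_mul,
      ENNReal.mul_div_mul_left _ _ (by simp) (by simp), Nat.cast_succ, add_comm]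
  calc ∑' k : ℕ, (k : ℝ≥0∞) ^ (n + 1) / k !
      = ∑' k : ℕ, (1 + k : ℝ≥0∞) ^ n / k ! := by
        rw [tsum_eq_zero_add' ENNReal.summable]
        simp only [hshift]
        simp
    _ = ∑' k : ℕ, ∑ m ∈ range (n + 1), n.choose m * ((k : ℝ≥0∞) ^ (n - m) / k !) := by
        refine tsum_congr fun k => ?_
        simp only [add_pow, one_pow, one_mul, div_eq_mul_inv, sum_mul]
        exact sum_congr rfl fun m _ => by ring
    _ = _ := by
        rw [Summable.tsum_finsetSum fun _ _ => ENNReal.summable]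
        simp only [ENNReal.tsum_mul_left]

theorem tsum_pow_div_factorial_eq_bell_mul (n : ℕ) :
    ∑' k : ℕ, (k : ℝ≥0∞) ^ n / k ! = Nat.bell n * ENNReal.ofReal (Real.exp 1) := by
  induction n using Nat.strong_induction_on with
  | _ n ih =>
  rcases n with _ | n
  · simp [← tsum_inv_factorial]
  · rw [tsum_pow_succ_div_factorial, Nat.bell_succ, ← Nat.range_succ_eq_Iic]
    push_cast
    rw [sum_mul]
    exact sum_congr rfl fun m hm => by rw [ih (n - m) (by omega), mul_assoc]

theorem tsum_inner_le_weight_mul_Lp {ι : Type*} (w f : ι → ℝ≥0∞) {p : ℝ} (hp : 1 ≤ p) :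
    ∑' i, w i * f i ≤ (∑' i, w i) ^ (1 - p⁻¹) * (∑' i, w i * f i ^ p) ^ p⁻¹ := by
  rw [ENNReal.tsum_eq_iSup_sum]
  refine iSup_le fun s => (inner_le_weight_mul_Lp_of_nonneg s hp w f).trans ?_
  have hp' : 0 ≤ 1 - p⁻¹ := sub_nonneg.mpr (inv_le_one_of_one_le₀ hp)
  gcongr <;> exact ENNReal.sum_le_tsum s

theorem tsum_mul_pow_pow_succ_le {ι : Type*} (w x : ι → ℝ≥0∞) (n : ℕ) :
    (∑' i, w i * x i ^ n) ^ (n + 1) ≤ (∑' i, w i) * (∑' i, w i * x i ^ (n + 1)) ^ n := by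
  rcases Nat.eq_zero_or_pos n with rfl | hn
  · simp
  set p : ℝ := (n + 1) / n with hp_def
  have hp : 1 ≤ p := by rw [le_div_iff₀ (by positivity)]; linarith
  have hpow (i) : (x i ^ n) ^ p = x i ^ (n + 1) := by
    rw [← ENNReal.rpow_natCast, ← ENNReal.rpow_mul,
      show (n : ℝ) * p = (n + 1 : ℕ) by rw [hp_def]; push_cast; field_simp, ENNReal.rpow_natCast]
  have H := tsum_inner_le_weight_mul_Lp w (fun i => x i ^ n) hp
  simp only [hpow] at H
  have h2 : p⁻¹ * (n + 1 : ℕ) = n := by rw [hp_def]; push_cast; field_simp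
  have h1 : (1 - p⁻¹) * (n + 1 : ℕ) = 1 := by rw [sub_mul, h2]; push_cast; ring
  calc (∑' i, w i * x i ^ n) ^ (n + 1)
      ≤ ((∑' i, w i) ^ (1 - p⁻¹) * (∑' i, w i * x i ^ (n + 1)) ^ p⁻¹) ^ (n + 1) := by gcongr
    _ = _ := by
      rw [mul_pow, ← ENNReal.rpow_mul_natCast, ← ENNReal.rpow_mul_natCast, h1, h2,
        ENNReal.rpow_one, ENNReal.rpow_natCast]

end ENNReal

theorem Nat.bell_pow_succ_le (n : ℕ) : Nat.bell n ^ (n + 1) ≤ Nat.bell (n + 1) ^ n := by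
  have hmoment (m : ℕ) :
      ∑' k : ℕ, (k ! : ℝ≥0∞)⁻¹ * (k : ℝ≥0∞) ^ m = Nat.bell m * ENNReal.ofReal (Real.exp 1) := by
    simpa only [ENNReal.div_eq_inv_mul] using ENNReal.tsum_pow_div_factorial_eq_bell_mul m
  have H := ENNReal.tsum_mul_pow_pow_succ_le (fun k : ℕ => (k ! : ℝ≥0∞)⁻¹) (fun k => k) n
  simp only [hmoment, ENNReal.tsum_inv_factorial] at H
  set e := ENNReal.ofReal (Real.exp 1)
  have he : e ^ (n + 1) ≠ 0 := by simp [e, Real.exp_pos]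
  have he' : e ^ (n + 1) ≠ ⊤ := by simp [e]
  have : (Nat.bell n : ℝ≥0∞) ^ (n + 1) * e ^ (n + 1) ≤ (Nat.bell (n + 1) : ℝ≥0∞) ^ n * e ^ (n + 1) :=
    calc _ = (Nat.bell n * e) ^ (n + 1) := (mul_pow _ _ _).symm
      _ ≤ e * (Nat.bell (n + 1) * e) ^ n := H
      _ = _ := by ring
  exact_mod_cast (ENNReal.mul_le_mul_iff_left he he').mp this

theorem stmt_10 (n : ℕ) (hn : 1 ≤ n) :
    (bell n : ℝ) ^ (((n : ℝ) + 1) / n) ≤ (bell (n + 1) : ℝ) ∧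
    (bell n : ℝ) / (bell (n + 1) : ℝ) ≤ (bell n : ℝ) ^ (-(1 : ℝ) / n) := by
  simp only [bell_eq_nat_bell]
  have hB : (0 : ℝ) < Nat.bell n := by exact_mod_cast Nat.bell_pos n
  have hpow : (Nat.bell n : ℝ) ^ (((n : ℝ) + 1) / n) ≤ Nat.bell (n + 1) :=
    calc (Nat.bell n : ℝ) ^ (((n : ℝ) + 1) / n)
        = ((Nat.bell n : ℝ) ^ (n + 1)) ^ (n⁻¹ : ℝ) := by
          rw [← Real.rpow_natCast, ← Real.rpow_mul hB.le]; push_cast; ring_nf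
      _ ≤ ((Nat.bell (n + 1) : ℝ) ^ n) ^ (n⁻¹ : ℝ) := by
          gcongr; exact_mod_cast Nat.bell_pow_succ_le n
      _ = Nat.bell (n + 1) := Real.pow_rpow_inv_natCast (by positivity) (by omega)
  refine ⟨hpow, ?_⟩
  calc (Nat.bell n : ℝ) / Nat.bell (n + 1)
      ≤ Nat.bell n / (Nat.bell n : ℝ) ^ (((n : ℝ) + 1) / n) := by
        gcongr
    _ = (Nat.bell n : ℝ) ^ (-(1 : ℝ) / n) := by
        rw [show -(1 : ℝ) / n = 1 - ((n : ℝ) + 1) / n by field_simp; ring, Real.rpow_sub hB,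
          Real.rpow_one]
end

section
/- If R is a transitive, irreflexive, non-branching, Noetherian, connected relation on a finite set X, then R equals the transitive closure of its transitive reduction R⁻ = R \ R², and (X, R⁻ with arrows reversed) is a tree: there is a unique root a₀ with no R⁻-successor, and every other element has exactly one R⁻-successor and reaches a₀ by iterating R⁻. -/
/-- The transitive reduction `R⁻ = R \ R²` of a relation. -/
def tred {X : Type*} (R : X → X → Prop) : X → X → Prop :=
  fun a b => R a b ∧ ¬ ∃ c, R a c ∧ R c b

private lemma tred_aux1 {X : Type*} [Fintype X] (R : X → X → Prop)
    (htrans : ∀ a b c : X, R a b → R b c → R a c)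
    (hirr : ∀ a : X, ¬ R a a) :
    ∀ a b : X, R a b → Relation.TransGen (tred R) a b := by
  have key : ∀ n : ℕ, ∀ a b : X, ({c | R a c ∧ R c b} : Set X).ncard ≤ n → R a b →
      Relation.TransGen (tred R) a b := by
    intro n
    induction n with
    | zero =>
      intro a b hcard hab
      refine Relation.TransGen.single ⟨hab, ?_⟩
      rintro ⟨c, hac, hcb⟩
      have hne : ({c | R a c ∧ R c b} : Set X).Nonempty := ⟨c, hac, hcb⟩
      have := Set.ncard_pos (Set.toFinite _) |>.mpr hne
      omega
    | succ n ih =>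
      intro a b hcard hab
      by_cases h : ∃ c, R a c ∧ R c b
      · obtain ⟨c, hac, hcb⟩ := h
        have hs1 : ({d | R a d ∧ R d c} : Set X) ⊂ {d | R a d ∧ R d b} := by
          constructor
          · rintro d ⟨h1, h2⟩; exact ⟨h1, htrans _ _ _ h2 hcb⟩
          · intro hsub
            have := hsub (⟨hac, hcb⟩ : c ∈ {d | R a d ∧ R d b})
            exact hirr c this.2
        have hs2 : ({d | R c d ∧ R d b} : Set X) ⊂ {d | R a d ∧ R d b} := by
          constructor
          · rintro d ⟨h1, h2⟩; exact ⟨htrans _ _ _ hac h1, h2⟩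
          · intro hsub
            have := hsub (⟨hac, hcb⟩ : c ∈ {d | R a d ∧ R d b})
            exact hirr c this.1
        have h1 := Set.ncard_lt_ncard hs1 (Set.toFinite _)
        have h2 := Set.ncard_lt_ncard hs2 (Set.toFinite _)
        exact (ih a c (by omega) hac).trans (ih c b (by omega) hcb)
      · exact Relation.TransGen.single ⟨hab, h⟩
  intro a b hab; exact key _ a b le_rfl hab

/-- If `a` has any `R`-successor, it has a `tred R`-successor. -/
private lemma tred_aux2 {X : Type*} [Fintype X] (R : X → X → Prop)
    (htrans : ∀ a b c : X, R a b → R b c → R a c)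
    (hirr : ∀ a : X, ¬ R a a) :
    ∀ a b : X, R a b → ∃ c, tred R a c := by
  have key : ∀ n : ℕ, ∀ a b : X, ({c | R a c ∧ R c b} : Set X).ncard ≤ n → R a b →
      ∃ c, tred R a c := by
    intro n
    induction n with
    | zero =>
      intro a b hcard hab
      refine ⟨b, hab, ?_⟩
      rintro ⟨c, hac, hcb⟩
      have hne : ({c | R a c ∧ R c b} : Set X).Nonempty := ⟨c, hac, hcb⟩
      have := Set.ncard_pos (Set.toFinite _) |>.mpr hne
      omega
    | succ n ih =>
      intro a b hcard hab
      by_cases h : ∃ c, R a c ∧ R c b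
      · obtain ⟨c, hac, hcb⟩ := h
        have hs1 : ({d | R a d ∧ R d c} : Set X) ⊂ {d | R a d ∧ R d b} := by
          constructor
          · rintro d ⟨h1, h2⟩; exact ⟨h1, htrans _ _ _ h2 hcb⟩
          · intro hsub
            have := hsub (⟨hac, hcb⟩ : c ∈ {d | R a d ∧ R d b})
            exact hirr c this.2
        have h1 := Set.ncard_lt_ncard hs1 (Set.toFinite _)
        exact ih a c (by omega) hac
      · exact ⟨b, hab, h⟩
  intro a b hab; exact key _ a b le_rfl hab

/-- Existence of a maximal element. -/
private lemma tred_aux3 {X : Type*} [Fintype X] [Nonempty X] (R : X → X → Prop)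
    (htrans : ∀ a b c : X, R a b → R b c → R a c)
    (hirr : ∀ a : X, ¬ R a a) :
    ∃ m : X, ∀ b, ¬ R m b := by
  have key : ∀ n : ℕ, ∀ a : X, ({x | R a x} : Set X).ncard ≤ n →
      ∃ m : X, ∀ b, ¬ R m b := by
    intro n
    induction n with
    | zero =>
      intro a hcard
      refine ⟨a, fun b hb => ?_⟩
      have hne : ({x | R a x} : Set X).Nonempty := ⟨b, hb⟩
      have := Set.ncard_pos (Set.toFinite _) |>.mpr hne
      omega
    | succ n ih =>
      intro a hcard
      by_cases h : ∃ b, R a b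
      · obtain ⟨b, hab⟩ := h
        have hs : ({x | R b x} : Set X) ⊂ {x | R a x} := by
          constructor
          · intro x hx; exact htrans _ _ _ hab hx
          · intro hsub
            exact hirr b (hsub (hab : b ∈ {x | R a x}))
        have := Set.ncard_lt_ncard hs (Set.toFinite _)
        exact ih b (by omega)
      · exact ⟨a, fun b hb => h ⟨b, hb⟩⟩
  obtain ⟨a⟩ : Nonempty X := inferInstance
  exact key _ a le_rfl

/-- Uniqueness of the maximal element, from connectedness. -/
private lemma tred_aux4 {X : Type*} (R : X → X → Prop)
    (htrans : ∀ a b c : X, R a b → R b c → R a c)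
    (hnb : ∀ a b c : X, R a b → R a c → R b c ∨ R c b ∨ b = c)
    (hconn : ∀ a b : X, Relation.EqvGen R a b)
    (m : X) (hm : ∀ b, ¬ R m b) :
    ∀ b : X, (∀ c, ¬ R b c) → b = m := by
  have P : ∀ a b : X, Relation.EqvGen R a b →
      ((a = m ∨ R a m) ↔ (b = m ∨ R b m)) := by
    intro a b h
    induction h with
    | rel a b hab =>
      constructor
      · rintro (rfl | ham)
        · exact absurd hab (hm b)
        · rcases hnb a b m hab ham with h1 | h2 | h3
          · exact Or.inr h1
          · exact absurd h2 (hm _)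
          · exact Or.inl h3
      · rintro (rfl | hbm)
        · exact Or.inr hab
        · exact Or.inr (htrans _ _ _ hab hbm)
    | refl a => exact Iff.rfl
    | symm a b _ ih => exact ih.symm
    | trans a b c _ _ ih1 ih2 => exact ih1.trans ih2
  intro b hb
  have := (P m b (hconn m b)).mp (Or.inl rfl)
  rcases this with rfl | h
  · rfl
  · exact absurd h (hb m)

theorem stmt_15 {X : Type*} [Fintype X] [Nonempty X] (R : X → X → Prop)
    (htrans : ∀ a b c : X, R a b → R b c → R a c)
    (hirr : ∀ a : X, ¬ R a a)
    (hnb : ∀ a b c : X, R a b → R a c → R b c ∨ R c b ∨ b = c)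
    (hnoeth : ¬ ∃ f : ℕ → X, ∀ i : ℕ, R (f i) (f (i + 1)) ∧ f i ≠ f (i + 1))
    (hconn : ∀ a b : X, Relation.EqvGen R a b) :
    (∀ a b : X, R a b ↔ Relation.TransGen (tred R) a b) ∧
    ∃ a₀ : X, (∀ b : X, ¬ tred R a₀ b) ∧
      (∀ a : X, (∀ b : X, ¬ tred R a b) → a = a₀) ∧
      (∀ a : X, a ≠ a₀ →
        (∃! b : X, tred R a b) ∧ Relation.ReflTransGen (tred R) a a₀) := by
  obtain ⟨a₀, ha₀⟩ := tred_aux3 R htrans hirr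
  have huniqmax := tred_aux4 R htrans hnb hconn a₀ ha₀
  have hiff : ∀ a b : X, R a b ↔ Relation.TransGen (tred R) a b := by
    intro a b
    constructor
    · exact tred_aux1 R htrans hirr a b
    · intro h
      induction h with
      | single h => exact h.1
      | tail _ h ih => exact htrans _ _ _ ih h.1
  refine ⟨hiff, a₀, fun b hb => absurd hb.1 (ha₀ b), ?_, ?_⟩
  · intro a ha
    refine huniqmax a fun c hc => ?_
    obtain ⟨d, hd⟩ := tred_aux2 R htrans hirr a c hc
    exact ha d hd
  · -- for a ≠ a₀ : unique tred successor, and reaches a₀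
    have huniq : ∀ a b c : X, tred R a b → tred R a c → b = c := by
      intro a b c hb hc
      rcases hnb a b c hb.1 hc.1 with h1 | h2 | h3
      · exact absurd ⟨b, hb.1, h1⟩ hc.2
      · exact absurd ⟨c, hc.1, h2⟩ hb.2
      · exact h3
    have key : ∀ n : ℕ, ∀ a : X, ({x | R a x} : Set X).ncard ≤ n → a ≠ a₀ →
        Relation.ReflTransGen (tred R) a a₀ := by
      intro n
      induction n with
      | zero =>
        intro a hcard hne
        exfalso
        refine hne (huniqmax a fun c hc => ?_)
        have hnem : ({x | R a x} : Set X).Nonempty := ⟨c, hc⟩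
        have := Set.ncard_pos (Set.toFinite _) |>.mpr hnem
        omega
      | succ n ih =>
        intro a hcard hne
        by_cases h : ∃ b, R a b
        · obtain ⟨b, hab⟩ := h
          obtain ⟨c, hc⟩ := tred_aux2 R htrans hirr a b hab
          have hs : ({x | R c x} : Set X) ⊂ {x | R a x} := by
            constructor
            · intro x hx; exact htrans _ _ _ hc.1 hx
            · intro hsub
              exact hirr c (hsub (hc.1 : c ∈ {x | R a x}))
          have hlt := Set.ncard_lt_ncard hs (Set.toFinite _)
          by_cases hca : c = a₀
          · exact Relation.ReflTransGen.single (hca ▸ hc)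
          · exact Relation.ReflTransGen.head hc (ih c (by omega) hca)
        · exact absurd (huniqmax a fun x hx => h ⟨x, hx⟩) hne
    intro a hne
    have hex : ∃ b, R a b := by
      by_contra h
      push_neg at h
      exact hne (huniqmax a h)
    obtain ⟨b, hab⟩ := hex
    obtain ⟨c, hc⟩ := tred_aux2 R htrans hirr a b hab
    exact ⟨⟨c, hc, fun d hd => huniq a d c hd hc⟩, key _ a le_rfl hne⟩
end

section
/- For each n, the map sending a connected transitive irreflexive non-branching Noetherian frame (i.e., a finite GL.3-frame) on [n] to its transitive reduction is a bijection onto the set of inverse trees on [n], with inverse given by transitive closure. -/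
/-- A connected finite GL.3-frame: transitive, irreflexive, non-branching,
Noetherian, connected. -/
def IsGL3Con {X : Type*} (R : X → X → Prop) : Prop :=
  (∀ a b c : X, R a b → R b c → R a c) ∧
  (∀ a : X, ¬ R a a) ∧
  (∀ a b c : X, R a b → R a c → R b c ∨ R c b ∨ b = c) ∧
  (¬ ∃ f : ℕ → X, ∀ i : ℕ, R (f i) (f (i + 1)) ∧ f i ≠ f (i + 1)) ∧
  (∀ a b : X, Relation.EqvGen R a b)

/-- An inverse tree: a unique root with no successor; every other element has
exactly one successor and reaches the root. -/
def IsInvTree {X : Type*} (S : X → X → Prop) : Prop :=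
  ∃ a₀ : X, (∀ b : X, ¬ S a₀ b) ∧
    (∀ a : X, (∀ b : X, ¬ S a b) → a = a₀) ∧
    ∀ a : X, a ≠ a₀ → (∃! b : X, S a b) ∧ Relation.ReflTransGen S a a₀

section Helpers
open Relation
variable {X : Type*}

/-! ### Inverse tree helpers -/

lemma it_succ {S : X → X → Prop} {a₀ : X} (h0 : ∀ b, ¬ S a₀ b)
    (h2 : ∀ a : X, a ≠ a₀ → (∃! b, S a b) ∧ ReflTransGen S a a₀)
    {a b c : X} (hab : S a b) (hac : S a c) : b = c := by
  have ha : a ≠ a₀ := fun h => h0 b (h ▸ hab)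
  obtain ⟨⟨d, _, hd⟩, _⟩ := h2 a ha
  rw [hd b hab, hd c hac]

lemma it_rtg {S : X → X → Prop} {a₀ : X}
    (h2 : ∀ a : X, a ≠ a₀ → (∃! b, S a b) ∧ ReflTransGen S a a₀) (a : X) :
    ReflTransGen S a a₀ := by
  by_cases h : a = a₀
  · exact h ▸ ReflTransGen.refl
  · exact (h2 a h).2

lemma it_irrefl {S : X → X → Prop} {a₀ : X} (h0 : ∀ b, ¬ S a₀ b)
    (h2 : ∀ a : X, a ≠ a₀ → (∃! b, S a b) ∧ ReflTransGen S a a₀) (a : X) :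
    ¬ TransGen S a a := by
  have key : ∀ a, ReflTransGen S a a₀ → ¬ TransGen S a a := by
    intro a h
    induction h using ReflTransGen.head_induction_on with
    | refl =>
      intro hT
      obtain ⟨c, hc, -⟩ := TransGen.head'_iff.mp hT
      exact h0 c hc
    | @head x y hxy hya ih =>
      intro hT
      obtain ⟨c, hxc, hcx⟩ := TransGen.head'_iff.mp hT
      have hcy : c = y := it_succ h0 h2 hxc hxy
      exact ih (TransGen.tail' (hcy ▸ hcx) hxy)
  exact key a (it_rtg h2 a)

lemma it_rtg_comp {S : X → X → Prop} {a₀ : X} (h0 : ∀ b, ¬ S a₀ b)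
    (h2 : ∀ a : X, a ≠ a₀ → (∃! b, S a b) ∧ ReflTransGen S a a₀)
    {x b c : X} (hxb : ReflTransGen S x b) (hxc : ReflTransGen S x c) :
    TransGen S b c ∨ TransGen S c b ∨ b = c := by
  induction hxb using ReflTransGen.head_induction_on generalizing c with
  | refl =>
    rcases reflTransGen_iff_eq_or_transGen.mp hxc with h | h
    · exact Or.inr (Or.inr h.symm)
    · exact Or.inl h
  | @head x y hxy hyb ih =>
    rcases hxc.cases_head with h | ⟨d, hxd, hdc⟩
    · subst h
      rcases reflTransGen_iff_eq_or_transGen.mp (hyb.head hxy) with h | h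
      · exact Or.inr (Or.inr h)
      · exact Or.inr (Or.inl h)
    · have : d = y := it_succ h0 h2 hxd hxy
      exact ih (this ▸ hdc)

/-! ### Generic finiteness helper -/

lemma noeth_of_trans_irrefl {R : X → X → Prop} [Finite X]
    (htr : ∀ a b c, R a b → R b c → R a c) (hirr : ∀ a, ¬ R a a) :
    ¬ ∃ f : ℕ → X, ∀ i : ℕ, R (f i) (f (i + 1)) ∧ f i ≠ f (i + 1) := by
  rintro ⟨f, hf⟩
  have chain : ∀ i j : ℕ, i < j → R (f i) (f j) := by
    intro i j hij
    induction hij with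
    | refl => exact (hf i).1
    | step h ih => exact htr _ _ _ ih (hf _).1
  obtain ⟨x, y, hxy, he⟩ := Finite.exists_ne_map_eq_of_infinite f
  rcases hxy.lt_or_gt with h | h
  · have := chain x y h; rw [he] at this; exact hirr _ this
  · have := chain y x h; rw [← he] at this; exact hirr _ this

/-! ### GL3 helpers -/

variable {R : X → X → Prop} [Finite X]

lemma gl3_wf (htr : ∀ a b c, R a b → R b c → R a c) (hirr : ∀ a, ¬ R a a) :
    WellFounded R := by
  haveI : IsTrans X R := ⟨fun a b c => htr a b c⟩
  haveI : IsIrrefl X R := ⟨hirr⟩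
  exact Finite.wellFounded_of_trans_of_irrefl R

lemma gl3_wf_swap (htr : ∀ a b c, R a b → R b c → R a c) (hirr : ∀ a, ¬ R a a) :
    WellFounded (Function.swap R) := by
  haveI : IsTrans X (Function.swap R) := ⟨fun a b c h1 h2 => htr c b a h2 h1⟩
  haveI : IsIrrefl X (Function.swap R) := ⟨hirr⟩
  exact Finite.wellFounded_of_trans_of_irrefl _

/-- Comparability of common "upper bounds". -/
lemma gl3_comp (htr : ∀ a b c, R a b → R b c → R a c)
    (hnb : ∀ a b c, R a b → R a c → R b c ∨ R c b ∨ b = c)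
    {b z z' : X} (h1 : b = z ∨ R b z) (h2 : b = z' ∨ R b z') :
    z = z' ∨ R z z' ∨ R z' z := by
  rcases h1 with rfl | h1
  · rcases h2 with rfl | h2
    · exact Or.inl rfl
    · exact Or.inr (Or.inl h2)
  · rcases h2 with rfl | h2
    · exact Or.inr (Or.inr h1)
    · rcases hnb _ _ _ h1 h2 with h | h | h
      · exact Or.inr (Or.inl h)
      · exact Or.inr (Or.inr h)
      · exact Or.inl h

/-- Any two roots (elements with no successor) of a connected GL3 frame agree. -/
lemma gl3_root_unique (htr : ∀ a b c, R a b → R b c → R a c)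
    (hnb : ∀ a b c, R a b → R a c → R b c ∨ R c b ∨ b = c)
    (hcon : ∀ a b : X, Relation.EqvGen R a b)
    {a b : X} (ha : ∀ c, ¬ R a c) (hb : ∀ c, ¬ R b c) : a = b := by
  have comp : ∀ x y : X, Relation.EqvGen R x y →
      ∃ z, (x = z ∨ R x z) ∧ (y = z ∨ R y z) := by
    intro x y h
    induction h with
    | rel x y hxy => exact ⟨y, Or.inr hxy, Or.inl rfl⟩
    | refl x => exact ⟨x, Or.inl rfl, Or.inl rfl⟩
    | symm x y _ ih => obtain ⟨z, h1, h2⟩ := ih; exact ⟨z, h2, h1⟩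
    | trans x y w _ _ ih1 ih2 =>
      obtain ⟨z, hxz, hyz⟩ := ih1
      obtain ⟨z', hyz', hwz'⟩ := ih2
      rcases gl3_comp htr hnb hyz hyz' with rfl | h | h
      · exact ⟨z, hxz, hwz'⟩
      · refine ⟨z', ?_, hwz'⟩
        rcases hxz with rfl | hxz
        · exact Or.inr h
        · exact Or.inr (htr _ _ _ hxz h)
      · refine ⟨z, hxz, ?_⟩
        rcases hwz' with rfl | hwz'
        · exact Or.inr h
        · exact Or.inr (htr _ _ _ hwz' h)
  obtain ⟨z, h1, h2⟩ := comp a b (hcon a b)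
  rcases h1 with rfl | h1
  · rcases h2 with rfl | h2
    · rfl
    · exact absurd h2 (hb _)
  · exact absurd h1 (ha _)

/-- Every element with a successor has a `tred`-successor that is moreover
minimal among successors. -/
lemma gl3_tred_succ (htr : ∀ a b c, R a b → R b c → R a c)
    (hirr : ∀ a, ¬ R a a) {a b : X} (hab : R a b) :
    ∃ m, R a m ∧ tred R a m ∧ ∀ c, R a c → ¬ R c m := by
  obtain ⟨m, hm, hmin⟩ := (gl3_wf htr hirr).has_min {c | R a c} ⟨b, hab⟩
  exact ⟨m, hm, ⟨hm, fun ⟨c, hac, hcm⟩ => hmin c hac hcm⟩, fun c hac hcm => hmin c hac hcm⟩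

lemma gl3_R_sub_tg (htr : ∀ a b c, R a b → R b c → R a c)
    (hirr : ∀ a, ¬ R a a)
    (hnb : ∀ a b c, R a b → R a c → R b c ∨ R c b ∨ b = c) :
    ∀ a b : X, R a b → TransGen (tred R) a b := by
  intro a
  induction a using (gl3_wf_swap htr hirr).induction with
  | _ a ih =>
    intro b hab
    obtain ⟨m, ham, htm, hmin⟩ := gl3_tred_succ htr hirr hab
    rcases hnb _ _ _ ham hab with h | h | rfl
    · exact (ih m ham b h).head htm
    · exact absurd h (hmin b hab)
    · exact TransGen.single htm

lemma gl3_tg_eq (htr : ∀ a b c, R a b → R b c → R a c)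
    (hirr : ∀ a, ¬ R a a)
    (hnb : ∀ a b c, R a b → R a c → R b c ∨ R c b ∨ b = c) :
    (fun a b => TransGen (tred R) a b) = R := by
  funext a b
  apply propext
  constructor
  · intro h
    induction h with
    | single h => exact h.1
    | tail _ h2 ih => exact htr _ _ _ ih h2.1
  · exact gl3_R_sub_tg htr hirr hnb a b

end Helpers

theorem stmt_16 (n : ℕ) (hn : 1 ≤ n) :
    (∀ R : Fin n → Fin n → Prop, IsGL3Con R → IsInvTree (tred R)) ∧
    (∀ S : Fin n → Fin n → Prop, IsInvTree S →
      IsGL3Con (fun a b => Relation.TransGen S a b)) ∧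
    (∀ R : Fin n → Fin n → Prop, IsGL3Con R →
      (fun a b => Relation.TransGen (tred R) a b) = R) ∧
    (∀ S : Fin n → Fin n → Prop, IsInvTree S →
      tred (fun a b => Relation.TransGen S a b) = S) := by
  open Relation in
  refine ⟨?_, ?_, ?_, ?_⟩
  · -- tred of GL3 is an inverse tree
    rintro R ⟨htr, hirr, hnb, -, hcon⟩
    -- the root
    obtain ⟨a₀, -, hmin⟩ := (gl3_wf_swap htr hirr).has_min Set.univ
      ⟨⟨0, hn⟩, trivial⟩
    have hroot : ∀ c, ¬ R a₀ c := fun c hc => hmin c trivial hc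
    have hno : ∀ a : Fin n, (∀ b, ¬ R a b) → a = a₀ := fun a ha =>
      gl3_root_unique htr hnb hcon ha hroot
    have hrtg : ∀ a : Fin n, ReflTransGen (tred R) a a₀ := by
      intro a
      induction a using (gl3_wf_swap htr hirr).induction with
      | _ a ih =>
        by_cases h : a = a₀
        · exact h ▸ ReflTransGen.refl
        · have : ∃ b, R a b := by
            by_contra hc
            push_neg at hc
            exact h (hno a hc)
          obtain ⟨b, hb⟩ := this
          obtain ⟨m, ham, htm, -⟩ := gl3_tred_succ htr hirr hb
          exact (ih m ham).head htm
    refine ⟨a₀, fun b hb => hroot b hb.1, fun a ha => hno a ?_, fun a ha => ⟨?_, hrtg a⟩⟩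
    · intro b hb
      obtain ⟨m, -, htm, -⟩ := gl3_tred_succ htr hirr hb
      exact ha m htm
    · have : ∃ b, R a b := by
        by_contra hc
        push_neg at hc
        exact ha (hno a hc)
      obtain ⟨b, hb⟩ := this
      obtain ⟨m, ham, htm, hminm⟩ := gl3_tred_succ htr hirr hb
      refine ⟨m, htm, fun c hc => ?_⟩
      rcases hnb _ _ _ hc.1 ham with h | h | h
      · exact absurd h (hminm c hc.1)
      · exact absurd ⟨m, ham, h⟩ hc.2
      · exact h
  · -- transitive closure of an inverse tree is GL3
    rintro S ⟨a₀, h0, h1, h2⟩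
    refine ⟨fun a b c h h' => h.trans h', it_irrefl h0 h2, ?_, ?_, ?_⟩
    · intro a b c hab hac
      obtain ⟨x, hax, hxb⟩ := TransGen.head'_iff.mp hab
      obtain ⟨y, hay, hyc⟩ := TransGen.head'_iff.mp hac
      have : y = x := it_succ h0 h2 hay hax
      exact it_rtg_comp h0 h2 hxb (this ▸ hyc)
    · exact noeth_of_trans_irrefl (fun a b c h h' => h.trans h') (it_irrefl h0 h2)
    · intro a b
      have key : ∀ x : Fin n, EqvGen (fun a b => TransGen S a b) x a₀ := by
        intro x
        rcases reflTransGen_iff_eq_or_transGen.mp (it_rtg h2 x) with h | h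
        · subst h; exact EqvGen.refl _
        · exact EqvGen.rel _ _ h
      exact (key a).trans _ _ _ ((key b).symm _ _)
  · -- TransGen ∘ tred = id on GL3
    rintro R ⟨htr, hirr, hnb, -, -⟩
    exact gl3_tg_eq htr hirr hnb
  · -- tred ∘ TransGen = id on inverse trees
    rintro S ⟨a₀, h0, h1, h2⟩
    funext a b
    apply propext
    constructor
    · rintro ⟨hab, hnc⟩
      obtain ⟨c, hac, hcb⟩ := TransGen.head'_iff.mp hab
      rcases reflTransGen_iff_eq_or_transGen.mp hcb with h | h
      · exact h ▸ hac
      · exact absurd ⟨c, TransGen.single hac, h⟩ hnc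
    · intro hab
      refine ⟨TransGen.single hab, ?_⟩
      rintro ⟨c, hac, hcb⟩
      obtain ⟨x, hax, hxc⟩ := TransGen.head'_iff.mp hac
      have hx : x = b := it_succ h0 h2 hax hab
      rw [hx] at hxc
      rcases reflTransGen_iff_eq_or_transGen.mp hxc with h | h
      · exact it_irrefl h0 h2 c (h ▸ hcb)
      · exact it_irrefl h0 h2 b (h.trans hcb)
end
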